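/- Assume 𝕜 contains a primitive d-th root of unity ξ. Then in Y_{d,n}(q), for every 1 ≤ a ≤ n−1, the element g_a commutes with X_a + X_{a+1} and with X_a X_{a+1}; consequently g_a commutes with p(X_a, X_{a+1}) for every symmetric polynomial p in two variables over 𝕜. -/

import Mathlib

open scoped Classical

noncomputable section

namespace YH

/-- Generators of the Yokonuma–Hecke algebra (0-based indexing):
`g a h` corresponds to the generator `g_{a+1}` of the paper, and `t a` to `t_{a+1}`. -/
inductive Gen (n : ℕ) : Type
  | g : (a : ℕ) → a + 1 < n → Gen n
  | t : Fin n → Gen n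

variable (𝕜 : Type) [Field 𝕜] (d n : ℕ) (q : 𝕜)

/-- The free algebra on the generators. -/
abbrev F : Type := FreeAlgebra 𝕜 (Gen n)

def G (a : ℕ) (h : a + 1 < n) : F 𝕜 n := FreeAlgebra.ι 𝕜 (Gen.g a h)

def T (a : Fin n) : F 𝕜 n := FreeAlgebra.ι 𝕜 (Gen.t a)

/-- The simple transposition `σ_a = (a, a+1)` (0-based). -/
def sw (a : ℕ) (h : a + 1 < n) : Equiv.Perm (Fin n) :=
  Equiv.swap ⟨a, by omega⟩ ⟨a + 1, h⟩

/-- The element `e_a = (1/d) Σ_{r=0}^{d-1} t_a^r t_{a+1}^{-r}` of the free algebra, where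
`t_{a+1}^{-r}` is represented by `t_{a+1}^{(d-r) % d}` (they agree once `t^d = 1` is imposed). -/
def Efree (a : ℕ) (h : a + 1 < n) : F 𝕜 n :=
  (d : 𝕜)⁻¹ • ∑ r ∈ Finset.range d,
    T 𝕜 n ⟨a, by omega⟩ ^ r * T 𝕜 n ⟨a + 1, h⟩ ^ ((d - r) % d)

/-- The defining relations of the Yokonuma–Hecke algebra `Y_{d,n}(q)`. -/
inductive Rel : F 𝕜 n → F 𝕜 n → Prop
  | torder (a : Fin n) : Rel (T 𝕜 n a ^ d) 1
  | tcomm (a b : Fin n) : Rel (T 𝕜 n a * T 𝕜 n b) (T 𝕜 n b * T 𝕜 n a)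
  | tg (a : Fin n) (b : ℕ) (hb : b + 1 < n) :
      Rel (T 𝕜 n a * G 𝕜 n b hb) (G 𝕜 n b hb * T 𝕜 n (sw n b hb a))
  | quad (a : ℕ) (h : a + 1 < n) :
      Rel (G 𝕜 n a h ^ 2)
        (algebraMap 𝕜 (F 𝕜 n) q + (q - 1) • (Efree 𝕜 d n a h * G 𝕜 n a h))
  | braid (a : ℕ) (h : a + 2 < n) :
      Rel (G 𝕜 n a (by omega) * G 𝕜 n (a + 1) h * G 𝕜 n a (by omega))
        (G 𝕜 n (a + 1) h * G 𝕜 n a (by omega) * G 𝕜 n (a + 1) h)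
  | gcomm (a b : ℕ) (ha : a + 1 < n) (hb : b + 1 < n) (hab : a + 1 < b) :
      Rel (G 𝕜 n a ha * G 𝕜 n b hb) (G 𝕜 n b hb * G 𝕜 n a ha)

/-- The Yokonuma–Hecke algebra `Y_{d,n}(q)`. -/
abbrev Y : Type := RingQuot (Rel 𝕜 d n q)

def π : F 𝕜 n →ₐ[𝕜] Y 𝕜 d n q := RingQuot.mkAlgHom 𝕜 (Rel 𝕜 d n q)

/-- The generator `g_{a+1}` of `Y_{d,n}(q)` (0-based: `g a h`). -/
def g (a : ℕ) (h : a + 1 < n) : Y 𝕜 d n q := π 𝕜 d n q (G 𝕜 n a h)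

/-- The generator `t_{a+1}` of `Y_{d,n}(q)` (0-based: `t a`). -/
def t (a : Fin n) : Y 𝕜 d n q := π 𝕜 d n q (T 𝕜 n a)

/-- The idempotent `e_a` in `Y_{d,n}(q)`. -/
def eA (a : ℕ) (h : a + 1 < n) : Y 𝕜 d n q := π 𝕜 d n q (Efree 𝕜 d n a h)

/-- `(1/d) Σ_{r=0}^{d-1} t_a^r t_b^{-r}` in `Y_{d,n}(q)`, with `t_b^{-r}` written
`t_b^{(d-r) % d}`. -/
def eabAux (a b : Fin n) : Y 𝕜 d n q :=
  (d : 𝕜)⁻¹ • ∑ r ∈ Finset.range d, t 𝕜 d n q a ^ r * t 𝕜 d n q b ^ ((d - r) % d)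

/-- The element `e_{ab}` (symmetrized so that `e_{ba} = e_{ab}`). -/
def eab (a b : Fin n) : Y 𝕜 d n q :=
  if (a : ℕ) ≤ (b : ℕ) then eabAux 𝕜 d n q a b else eabAux 𝕜 d n q b a

/-- Set partitions of `{1, …, n}` are identified with equivalence relations, i.e. with
`Setoid (Fin n)`; `a ∼_A b` is `A.r a b`. -/
abbrev SetPar (n : ℕ) := Setoid (Fin n)

/-- `e(A) = ∏_{a ∼_A b, a ≠ b} e_{ab}` (the factors commute, so the product may be
taken in any fixed order). -/
def eSet (A : Setoid (Fin n)) : Y 𝕜 d n q :=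
  (((List.finRange n) ×ˢ (List.finRange n)).map
    (fun p => if A.r p.1 p.2 ∧ p.1 ≠ p.2 then eab 𝕜 d n q p.1 p.2 else 1)).prod

/-- `e(j) = ∏_{a=1}^n ((1/d) Σ_{r=0}^{d-1} ξ^{-j_a r} t_a^r)` for `j ∈ (ℤ/dℤ)^n`. -/
def ej (ξ : 𝕜) (j : Fin n → ZMod d) : Y 𝕜 d n q :=
  ((List.finRange n).map (fun a =>
    (d : 𝕜)⁻¹ • ∑ r ∈ Finset.range d,
      ξ ^ (((-(j a)) * (r : ZMod d)).val) • t 𝕜 d n q a ^ r)).prod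

/-- `J_A = { j ∈ (ℤ/dℤ)^n : j_a = j_b ⇔ a ∼_A b }`. -/
def JA [NeZero d] (A : Setoid (Fin n)) : Finset (Fin n → ZMod d) :=
  Finset.univ.filter (fun j => ∀ a b : Fin n, j a = j b ↔ A.r a b)

/-- `ē(A) = Σ_{j ∈ J_A} e(j)`. -/
def ebar [NeZero d] (ξ : 𝕜) (A : Setoid (Fin n)) : Y 𝕜 d n q :=
  ∑ j ∈ JA d n A, ej 𝕜 d n q ξ j

/-- The Jucys–Murphy elements: `X 0 = X_1 = 1` and `X (a+1) = X_{a+2} = q⁻¹ g_{a+1} X_{a+1} g_{a+1}`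
(0-based indexing: `X a h` is the paper's `X_{a+1}`). -/
def X : (a : ℕ) → a < n → Y 𝕜 d n q
  | 0, _ => 1
  | a + 1, h => q⁻¹ • (g 𝕜 d n q a h * X a (by omega) * g 𝕜 d n q a h)

/-- The action of a permutation on set partitions (equivalence relations). -/
def permSetoid (σ : Equiv.Perm (Fin n)) (A : Setoid (Fin n)) : Setoid (Fin n) where
  r x y := A.r (σ.symm x) (σ.symm y)
  iseqv := ⟨fun _ => A.iseqv.refl _, fun h => A.iseqv.symm h, fun h h' => A.iseqv.trans h h'⟩

instance : Finite (Setoid (Fin n)) :=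
  Finite.of_injective (fun A : Setoid (Fin n) => A.r)
    (fun A B h => by cases A; cases B; simp only at h; subst h; rfl)

noncomputable instance : Fintype (Setoid (Fin n)) := Fintype.ofFinite _

/-- Evaluation of a two-variable polynomial at the commuting pair `(x, y)`:
`p(x,y) = Σ_m coeff(m) • x^{m 0} y^{m 1}`. -/
def evalXY (p : MvPolynomial (Fin 2) 𝕜) (x y : Y 𝕜 d n q) : Y 𝕜 d n q :=
  ∑ m ∈ p.support, p.coeff m • (x ^ m 0 * y ^ m 1)

end YH

namespace YH

section Aux

variable {𝕜 : Type} [Field 𝕜] {d n : ℕ} {q : 𝕜}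

/-- Pointed reassociation helper. -/
lemma commz {M : Type*} [Semigroup M] {u v : M} (h : u * v = v * u) (z : M) :
    u * (v * z) = v * (u * z) := by rw [← mul_assoc, h, mul_assoc]

lemma rel_eq {x y : F 𝕜 n} (h : Rel 𝕜 d n q x y) : π 𝕜 d n q x = π 𝕜 d n q y :=
  RingQuot.mkAlgHom_rel 𝕜 h

lemma t_g (a : Fin n) (b : ℕ) (hb : b + 1 < n) :
    t 𝕜 d n q a * g 𝕜 d n q b hb = g 𝕜 d n q b hb * t 𝕜 d n q (sw n b hb a) := by
  have := rel_eq (q := q) (Rel.tg (𝕜 := 𝕜) (d := d) a b hb)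
  simpa only [map_mul, t, g] using this

lemma t_t (a b : Fin n) :
    Commute (t 𝕜 d n q a) (t 𝕜 d n q b) := by
  have := rel_eq (q := q) (Rel.tcomm (𝕜 := 𝕜) (d := d) a b)
  show _ * _ = _ * _
  simpa only [map_mul, t] using this

lemma g_braid (a : ℕ) (h2 : a + 2 < n) (h1 : a + 1 < n) (h1' : a + 2 < n) :
    g 𝕜 d n q a h1 * g 𝕜 d n q (a + 1) h1' * g 𝕜 d n q a h1
      = g 𝕜 d n q (a + 1) h1' * g 𝕜 d n q a h1 * g 𝕜 d n q (a + 1) h1' := by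
  have := rel_eq (q := q) (Rel.braid (𝕜 := 𝕜) (d := d) a h2)
  simpa only [map_mul, g] using this

lemma g_g (a b : ℕ) (ha : a + 1 < n) (hb : b + 1 < n) (hab : a + 1 < b) :
    g 𝕜 d n q a ha * g 𝕜 d n q b hb = g 𝕜 d n q b hb * g 𝕜 d n q a ha := by
  have := rel_eq (q := q) (Rel.gcomm (𝕜 := 𝕜) (d := d) a b ha hb hab)
  simpa only [map_mul, g] using this

lemma g_quad (a : ℕ) (h : a + 1 < n) :
    g 𝕜 d n q a h * g 𝕜 d n q a h
      = q • (1 : Y 𝕜 d n q) + (q - 1) • (eA 𝕜 d n q a h * g 𝕜 d n q a h) := by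
  have := rel_eq (q := q) (Rel.quad (𝕜 := 𝕜) (d := d) (q := q) a h)
  simp only [map_pow, map_add, map_mul, map_smul, AlgHom.commutes,
    Algebra.algebraMap_eq_smul_one] at this
  simpa only [g, eA, pow_two, map_one] using this

lemma sw_left (a : ℕ) (h : a + 1 < n) (h' : a < n) :
    sw n a h ⟨a, h'⟩ = ⟨a + 1, h⟩ := Equiv.swap_apply_left _ _

lemma sw_right (a : ℕ) (h : a + 1 < n) :
    sw n a h ⟨a + 1, h⟩ = ⟨a, by omega⟩ := Equiv.swap_apply_right _ _

lemma sw_sw (a : ℕ) (h : a + 1 < n) (b : Fin n) :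
    sw n a h (sw n a h b) = b := Equiv.swap_apply_self _ _ _

lemma tpow_g (a : Fin n) (b : ℕ) (hb : b + 1 < n) (r : ℕ) :
    t 𝕜 d n q a ^ r * g 𝕜 d n q b hb = g 𝕜 d n q b hb * t 𝕜 d n q (sw n b hb a) ^ r := by
  induction r with
  | zero => simp
  | succ r ih =>
      rw [pow_succ, mul_assoc, t_g, ← mul_assoc, ih, mul_assoc, ← pow_succ]

lemma eA_eq (a : ℕ) (h : a + 1 < n) :
    eA 𝕜 d n q a h = (d : 𝕜)⁻¹ • ∑ r ∈ Finset.range d,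
      t 𝕜 d n q ⟨a, by omega⟩ ^ r * t 𝕜 d n q ⟨a + 1, h⟩ ^ ((d - r) % d) := by
  simp only [eA, Efree, map_smul, map_sum, map_mul, map_pow, t]

lemma mod_invol {r : ℕ} (hr : r < d) : (d - (d - r) % d) % d = r := by
  rcases Nat.eq_zero_or_pos r with h | h
  · subst h; simp [Nat.mod_self]
  · have h1 : d - r < d := by omega
    rw [Nat.mod_eq_of_lt h1, Nat.mod_eq_of_lt (by omega : d - (d - r) < d)]
    omega

lemma e_sum_symm (x y : Fin n) :
    ∑ r ∈ Finset.range d, t 𝕜 d n q x ^ r * t 𝕜 d n q y ^ ((d - r) % d)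
      = ∑ r ∈ Finset.range d, t 𝕜 d n q y ^ r * t 𝕜 d n q x ^ ((d - r) % d) := by
  refine Finset.sum_nbij' (fun r => (d - r) % d) (fun r => (d - r) % d) ?_ ?_ ?_ ?_ ?_
  · intro r hr
    simp only [Finset.mem_range] at hr ⊢
    exact Nat.mod_lt _ (by omega)
  · intro r hr
    simp only [Finset.mem_range] at hr ⊢
    exact Nat.mod_lt _ (by omega)
  · intro r hr
    simp only [Finset.mem_range] at hr
    exact mod_invol hr
  · intro r hr
    simp only [Finset.mem_range] at hr
    exact mod_invol hr
  · intro r hr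
    simp only [Finset.mem_range] at hr
    rw [mod_invol hr]
    exact ((t_t x y).pow_pow _ _).eq

lemma e_g (a : ℕ) (h : a + 1 < n) (h' : a < n) :
    eA 𝕜 d n q a h * g 𝕜 d n q a h = g 𝕜 d n q a h * eA 𝕜 d n q a h := by
  have key : ∀ r s : ℕ,
      t 𝕜 d n q ⟨a, h'⟩ ^ r * t 𝕜 d n q ⟨a + 1, h⟩ ^ s * g 𝕜 d n q a h
        = g 𝕜 d n q a h * (t 𝕜 d n q ⟨a + 1, h⟩ ^ r * t 𝕜 d n q ⟨a, h'⟩ ^ s) := by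
    intro r s
    rw [mul_assoc, tpow_g, sw_right, ← mul_assoc, tpow_g, sw_left a h h', mul_assoc]
  rw [eA_eq a h, smul_mul_assoc, mul_smul_comm]
  congr 1
  calc (∑ r ∈ Finset.range d,
        t 𝕜 d n q ⟨a, by omega⟩ ^ r * t 𝕜 d n q ⟨a + 1, h⟩ ^ ((d - r) % d)) * g 𝕜 d n q a h
      = ∑ r ∈ Finset.range d,
          t 𝕜 d n q ⟨a, h'⟩ ^ r * t 𝕜 d n q ⟨a + 1, h⟩ ^ ((d - r) % d) * g 𝕜 d n q a h :=
        Finset.sum_mul _ _ _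
    _ = ∑ r ∈ Finset.range d, g 𝕜 d n q a h *
          (t 𝕜 d n q ⟨a + 1, h⟩ ^ r * t 𝕜 d n q ⟨a, h'⟩ ^ ((d - r) % d)) :=
        Finset.sum_congr rfl fun r _ => key r _
    _ = g 𝕜 d n q a h * ∑ r ∈ Finset.range d,
          t 𝕜 d n q ⟨a + 1, h⟩ ^ r * t 𝕜 d n q ⟨a, h'⟩ ^ ((d - r) % d) :=
        (Finset.mul_sum _ _ _).symm
    _ = g 𝕜 d n q a h * ∑ r ∈ Finset.range d,
          t 𝕜 d n q ⟨a, h'⟩ ^ r * t 𝕜 d n q ⟨a + 1, h⟩ ^ ((d - r) % d) := by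
        rw [e_sum_symm]

lemma X_succ (a : ℕ) (ha : a + 1 < n) (ha' : a < n) :
    X 𝕜 d n q (a + 1) ha
      = q⁻¹ • (g 𝕜 d n q a ha * X 𝕜 d n q a ha' * g 𝕜 d n q a ha) := rfl

lemma comm_t_X (b : Fin n) : ∀ (a : ℕ) (ha : a < n),
    Commute (t 𝕜 d n q b) (X 𝕜 d n q a ha) := by
  intro a
  induction a generalizing b with
  | zero => intro ha; exact Commute.one_right _
  | succ a ih =>
      intro ha
      have ha' : a < n := by omega
      rw [X_succ a ha ha']
      refine Commute.smul_right ?_ _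
      show _ * _ = _ * _
      calc t 𝕜 d n q b * (g 𝕜 d n q a ha * X 𝕜 d n q a ha' * g 𝕜 d n q a ha)
          = (t 𝕜 d n q b * g 𝕜 d n q a ha) * X 𝕜 d n q a ha' * g 𝕜 d n q a ha := by
            simp only [mul_assoc]
        _ = g 𝕜 d n q a ha * (t 𝕜 d n q (sw n a ha b) * X 𝕜 d n q a ha') * g 𝕜 d n q a ha := by
            rw [t_g]; simp only [mul_assoc]
        _ = g 𝕜 d n q a ha * (X 𝕜 d n q a ha' * t 𝕜 d n q (sw n a ha b)) * g 𝕜 d n q a ha := by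
            rw [(ih (sw n a ha b) ha').eq]
        _ = g 𝕜 d n q a ha * X 𝕜 d n q a ha' * (t 𝕜 d n q (sw n a ha b) * g 𝕜 d n q a ha) := by
            simp only [mul_assoc]
        _ = g 𝕜 d n q a ha * X 𝕜 d n q a ha' * g 𝕜 d n q a ha * t 𝕜 d n q b := by
            rw [t_g, sw_sw]; simp only [mul_assoc]

lemma comm_e_X (a' : ℕ) (h' : a' + 1 < n) (a : ℕ) (ha : a < n) :
    Commute (eA 𝕜 d n q a' h') (X 𝕜 d n q a ha) := by
  rw [eA_eq]
  refine Commute.smul_left ?_ _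
  refine Commute.sum_left _ _ _ fun r _ => ?_
  exact ((comm_t_X _ a ha).pow_left _).mul_left ((comm_t_X _ a ha).pow_left _)

lemma comm_g_X (b : ℕ) (hb : b + 1 < n) : ∀ (a : ℕ) (ha : a < n), a < b →
    Commute (g 𝕜 d n q b hb) (X 𝕜 d n q a ha) := by
  intro a
  induction a with
  | zero => intro ha _; exact Commute.one_right _
  | succ a ih =>
      intro ha hab
      have ha' : a < n := by omega
      have ha'' : a + 1 < n := by omega
      rw [X_succ a ha ha']
      refine Commute.smul_right ?_ _
      have hg : Commute (g 𝕜 d n q b hb) (g 𝕜 d n q a ha) := (g_g a b ha hb hab).symm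
      exact (hg.mul_right (ih ha' (by omega))).mul_right hg

/-- Abstract core of the Jucys–Murphy commutation induction. -/
lemma key_core {M : Type*} [Monoid M] {G Z H : M}
    (hzh : H * Z = Z * H)
    (hbr : G * H * G = H * G * H)
    (hih : Z * G * Z * G = G * Z * G * Z) :
    (G * Z * G) * (H * (G * Z * G) * H) = (H * (G * Z * G) * H) * (G * Z * G) := by
  have hb' : ∀ z, G * (H * (G * z)) = H * (G * (H * z)) := fun z => by
    rw [← mul_assoc, ← mul_assoc, hbr, mul_assoc, mul_assoc]
  have hb'' : ∀ z, H * (G * (H * z)) = G * (H * (G * z)) := fun z => (hb' z).symm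
  have hzh' : ∀ z, Z * (H * z) = H * (Z * z) := fun z => commz hzh.symm z
  have hhz' : ∀ z, H * (Z * z) = Z * (H * z) := fun z => commz hzh z
  have hih' : ∀ z, Z * (G * (Z * (G * z))) = G * (Z * (G * (Z * z))) := fun z => by
    rw [← mul_assoc, ← mul_assoc, ← mul_assoc, hih, mul_assoc, mul_assoc, mul_assoc]
  have hbr_end : H * (G * H) = G * (H * G) := by
    rw [← mul_assoc, ← hbr, mul_assoc]
  simp only [mul_assoc]
  rw [hb' (Z * (G * H)), hzh' (G * (H * (Z * (G * H)))), hhz' (G * H), hbr_end,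
    hih' (H * G), hb' (Z * G), hzh' (G * (H * (Z * G))), hhz' G,
    hb'' (Z * (G * (Z * (H * G))))]

lemma comm_key : ∀ (a : ℕ) (h : a + 1 < n) (ha : a < n),
    Commute (X 𝕜 d n q a ha) (g 𝕜 d n q a h * X 𝕜 d n q a ha * g 𝕜 d n q a h) := by
  intro a
  induction a with
  | zero => intro h ha; exact Commute.one_left _
  | succ b ih =>
      intro h ha
      have hb' : b + 1 < n := by omega
      have hb'' : b < n := by omega
      set G := g 𝕜 d n q b hb' with hG
      set H := g 𝕜 d n q (b + 1) h with hH
      set Z := X 𝕜 d n q b hb'' with hZ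
      have hx : X 𝕜 d n q (b + 1) ha = q⁻¹ • (G * Z * G) := X_succ b ha hb''
      rw [hx]
      have core : Commute (G * Z * G) (H * (G * Z * G) * H) := by
        refine key_core ?_ ?_ ?_
        · exact (comm_g_X (b + 1) h b hb'' (by omega)).eq
        · exact g_braid b (by omega) hb' h
        · have := (ih hb' hb'').eq
          simp only [← mul_assoc] at this
          exact this
      have : H * (q⁻¹ • (G * Z * G)) * H = q⁻¹ • (H * (G * Z * G) * H) := by
        rw [mul_smul_comm, smul_mul_assoc]
      rw [this]
      exact (core.smul_right _).smul_left _

lemma comm_g_plus (hq0 : q ≠ 0) (a : ℕ) (h : a + 1 < n) (ha : a < n) :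
    Commute (g 𝕜 d n q a h)
      (X 𝕜 d n q a ha + X 𝕜 d n q (a + 1) h) := by
  set G := g 𝕜 d n q a h with hGdef
  set e := eA 𝕜 d n q a h with hedef
  set Xa := X 𝕜 d n q a ha with hXadef
  have hsq : G * G = q • (1 : Y 𝕜 d n q) + (q - 1) • (e * G) := g_quad a h
  have hcomm_eX : e * Xa = Xa * e := (comm_e_X a h a ha).eq
  have hcomm_eG : e * G = G * e := e_g a h ha
  have hmid : e * G * Xa * G = G * Xa * (e * G) := by
    calc e * G * Xa * G = G * e * Xa * G := by rw [hcomm_eG]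
      _ = G * (e * Xa) * G := by rw [mul_assoc G e Xa]
      _ = G * (Xa * e) * G := by rw [hcomm_eX]
      _ = G * Xa * (e * G) := by rw [← mul_assoc G Xa e, mul_assoc (G * Xa) e G]
  have h1 : G * (G * Xa * G) = q • (Xa * G) + (q - 1) • (G * Xa * (e * G)) := by
    calc G * (G * Xa * G) = G * G * Xa * G := by rw [← mul_assoc, ← mul_assoc]
      _ = (q • (1 : Y 𝕜 d n q) + (q - 1) • (e * G)) * Xa * G := by rw [hsq]
      _ = q • (Xa * G) + (q - 1) • (e * G * Xa * G) := by
          rw [add_mul, add_mul, smul_mul_assoc, smul_mul_assoc, smul_mul_assoc,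
            smul_mul_assoc, one_mul]
      _ = q • (Xa * G) + (q - 1) • (G * Xa * (e * G)) := by rw [hmid]
  have h2 : (G * Xa * G) * G = q • (G * Xa) + (q - 1) • (G * Xa * (e * G)) := by
    calc (G * Xa * G) * G = G * Xa * (G * G) := by rw [mul_assoc]
      _ = G * Xa * (q • (1 : Y 𝕜 d n q) + (q - 1) • (e * G)) := by rw [hsq]
      _ = q • (G * Xa) + (q - 1) • (G * Xa * (e * G)) := by
          rw [mul_add, mul_smul_comm, mul_one, mul_smul_comm]
  show G * _ = _ * G
  rw [X_succ a h ha, ← hGdef, ← hXadef, mul_add, add_mul, mul_smul_comm, smul_mul_assoc,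
    h1, h2]
  simp only [smul_add, smul_smul]
  rw [inv_mul_cancel₀ hq0, one_smul, one_smul, add_left_comm]

lemma comm_g_mul (a : ℕ) (h : a + 1 < n) (ha : a < n) :
    Commute (g 𝕜 d n q a h)
      (X 𝕜 d n q a ha * X 𝕜 d n q (a + 1) h) := by
  have ck := (comm_key (𝕜 := 𝕜) (d := d) (q := q) a h ha).eq
  simp only [← mul_assoc] at ck
  show _ * _ = _ * _
  rw [X_succ a h ha]
  simp only [mul_smul_comm, smul_mul_assoc, ← mul_assoc]
  rw [ck]

lemma comm_evalXY (Gg x y : Y 𝕜 d n q) (hxy : Commute x y)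
    (hsum : Commute Gg (x + y)) (hprod : Commute Gg (x * y))
    (p : MvPolynomial (Fin 2) 𝕜) (hp : p.IsSymmetric) :
    Commute Gg (evalXY 𝕜 d n q p x y) := by
  classical
  set A := Algebra.adjoin 𝕜 ({x, y} : Set (Y 𝕜 d n q)) with hA
  letI : CommRing A := Algebra.adjoinCommRingOfComm 𝕜 (by
    rintro u hu v hv
    simp only [Set.mem_insert_iff, Set.mem_singleton_iff] at hu hv
    rcases hu with rfl | rfl <;> rcases hv with rfl | rfl
    · rfl
    · exact hxy.eq
    · exact hxy.symm.eq
    · rfl)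
  have hxA : x ∈ A := Algebra.subset_adjoin (by simp)
  have hyA : y ∈ A := Algebra.subset_adjoin (by simp)
  set v : Fin 2 → A := ![⟨x, hxA⟩, ⟨y, hyA⟩] with hvdef
  have hv0 : (A.val : A →ₐ[𝕜] Y 𝕜 d n q) (v 0) = x := rfl
  have hv1 : (A.val : A →ₐ[𝕜] Y 𝕜 d n q) (v 1) = y := rfl
  have heval : ∀ r : MvPolynomial (Fin 2) 𝕜,
      evalXY 𝕜 d n q r x y = A.val (MvPolynomial.aeval v r) := by
    intro r
    calc evalXY 𝕜 d n q r x y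
        = ∑ m ∈ r.support, MvPolynomial.coeff m r • (x ^ m 0 * y ^ m 1) := rfl
      _ = ∑ m ∈ r.support,
            algebraMap 𝕜 (Y 𝕜 d n q) (MvPolynomial.coeff m r) * (x ^ m 0 * y ^ m 1) := by
          simp only [Algebra.smul_def]
      _ = A.val (MvPolynomial.aeval v r) := by
          rw [MvPolynomial.aeval_def, MvPolynomial.eval₂_eq', map_sum]
          refine Finset.sum_congr rfl fun m _ => ?_
          rw [map_mul, AlgHom.commutes, Fin.prod_univ_two, map_mul, map_pow, map_pow,
            hv0, hv1]
  set E : Fin 2 → MvPolynomial (Fin 2) 𝕜 :=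
    fun i => MvPolynomial.esymm (Fin 2) 𝕜 ((i : ℕ) + 1) with hEdef
  obtain ⟨w, hw⟩ := MvPolynomial.esymmAlgHom_surjective (R := 𝕜) (σ := Fin 2) (n := 2)
      (by simp) ⟨p, (MvPolynomial.mem_symmetricSubalgebra p).2 hp⟩
  have hp2 : MvPolynomial.aeval E w = p := by
    have h0 := congrArg Subtype.val hw
    rwa [MvPolynomial.esymmAlgHom_apply] at h0
  have hcomp : MvPolynomial.aeval v p
      = MvPolynomial.aeval (fun i => MvPolynomial.aeval v (E i)) w := by
    have h3 := MvPolynomial.comp_aeval (f := E) (φ := MvPolynomial.aeval v)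
    calc MvPolynomial.aeval v p
        = (MvPolynomial.aeval v).comp (MvPolynomial.aeval E) w := by rw [← hp2]; rfl
      _ = MvPolynomial.aeval (fun i => MvPolynomial.aeval v (E i)) w := by rw [h3]
  have hmem : MvPolynomial.aeval (fun i => MvPolynomial.aeval v (E i)) w ∈
      Algebra.adjoin 𝕜 (Set.range fun i => MvPolynomial.aeval v (E i)) := by
    rw [Algebra.adjoin_range_eq_range_aeval]
    exact ⟨w, rfl⟩
  have hE0 : A.val (MvPolynomial.aeval v (E 0)) = x + y := by
    have : E 0 = MvPolynomial.X 0 + MvPolynomial.X 1 := by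
      simp [hEdef, MvPolynomial.esymm_one, Fin.sum_univ_two]
    rw [this, map_add, map_add, MvPolynomial.aeval_X, MvPolynomial.aeval_X, hv0, hv1]
  have hE1 : A.val (MvPolynomial.aeval v (E 1)) = x * y := by
    have e2 : MvPolynomial.esymm (Fin 2) 𝕜 2 = MvPolynomial.X 0 * MvPolynomial.X 1 := by
      have hps : Finset.powersetCard 2 (Finset.univ : Finset (Fin 2))
          = {(Finset.univ : Finset (Fin 2))} := by
        simpa using Finset.powersetCard_self (Finset.univ : Finset (Fin 2))
      rw [MvPolynomial.esymm, hps, Finset.sum_singleton, Fin.prod_univ_two]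
    have : E 1 = MvPolynomial.X 0 * MvPolynomial.X 1 := by
      rw [hEdef]; exact e2
    rw [this, map_mul, map_mul, MvPolynomial.aeval_X, MvPolynomial.aeval_X, hv0, hv1]
  have hle : Algebra.adjoin 𝕜 (Set.range fun i => MvPolynomial.aeval v (E i)) ≤
      (Subalgebra.centralizer 𝕜 {Gg}).comap A.val := by
    rw [Algebra.adjoin_le_iff]
    rintro _ ⟨i, rfl⟩
    rw [SetLike.mem_coe, Subalgebra.mem_comap, Subalgebra.mem_centralizer_iff]
    intro gg hgg
    rw [Set.mem_singleton_iff] at hgg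
    subst hgg
    fin_cases i
    · show gg * A.val ((MvPolynomial.aeval v) (E 0))
          = A.val ((MvPolynomial.aeval v) (E 0)) * gg
      rw [hE0]; exact hsum.eq
    · show gg * A.val ((MvPolynomial.aeval v) (E 1))
          = A.val ((MvPolynomial.aeval v) (E 1)) * gg
      rw [hE1]; exact hprod.eq
  have hfin := hle hmem
  rw [Subalgebra.mem_comap, Subalgebra.mem_centralizer_iff] at hfin
  have hfin2 := hfin Gg rfl
  show _ * _ = _ * _
  rw [heval p, hcomp]
  exact hfin2

end Aux

end YH

open YH in
/-- in `Y_{d,n}(q)`, `g_a` commutes with `X_a + X_{a+1}` and with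
`X_a X_{a+1}`; consequently `g_a` commutes with `p(X_a, X_{a+1})` for every symmetric
polynomial `p` in two variables over `𝕜` (0-based indices). -/
theorem statement10 (𝕜 : Type) [Field 𝕜] (d n : ℕ) (hd : 0 < d) (hn : 0 < n)
    (hdk : (d : 𝕜) ≠ 0) (q : 𝕜) (hq0 : q ≠ 0) (hq1 : q ≠ 1) :
    ∀ (a : ℕ) (h : a + 1 < n),
      Commute (g 𝕜 d n q a h) (X 𝕜 d n q a (by omega) + X 𝕜 d n q (a + 1) h)
      ∧ Commute (g 𝕜 d n q a h) (X 𝕜 d n q a (by omega) * X 𝕜 d n q (a + 1) h)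
      ∧ ∀ p : MvPolynomial (Fin 2) 𝕜, p.IsSymmetric →
          Commute (g 𝕜 d n q a h)
            (evalXY 𝕜 d n q p (X 𝕜 d n q a (by omega)) (X 𝕜 d n q (a + 1) h)) := by
  intro a h
  have ha : a < n := by omega
  have hxy : Commute (X 𝕜 d n q a ha) (X 𝕜 d n q (a + 1) h) := by
    rw [X_succ a h ha]
    exact (comm_key (𝕜 := 𝕜) (d := d) (q := q) a h ha).smul_right _
  exact ⟨comm_g_plus hq0 a h ha, comm_g_mul a h ha,
    fun p hp => comm_evalXY _ _ _ hxy (comm_g_plus hq0 a h ha) (comm_g_mul a h ha) p hp⟩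

end
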